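/- A set of atomic linearity constraints over the two-point lattice {•, ◦} is satisfiable if and only if its transitive closure does not contain the constraint ◦ ⪯ •; moreover, when it is satisfiable, the substitution mapping every variable x with ◦ ⪯ x in the transitive closure (the variables reachable from ◦) to ◦ and every other variable to • is a solution. -/
import Mathlib


open Classical

/-- Atomic linearity terms: the constants `unl` (•) and `lin` (◦), or a
linearity variable. -/
inductive LTerm
  | unl
  | lin
  | var (x : ℕ)
deriving DecidableEq

/-- Evaluate a term under a valuation of variables into the two-point
lattice, encoded as `Bool` with `false = •` and `true = ◦` (so `≤` on `Bool`
is the order • ≤ ◦); the valuation is extended as the identity on constants. -/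
def evalT (v : ℕ → Bool) : LTerm → Bool
  | LTerm.unl => false
  | LTerm.lin => true
  | LTerm.var x => v x

/-- A valuation satisfies a constraint set when each constraint `τ₁ ⪯ τ₂`
holds: `v(τ₁) ≤ v(τ₂)`. -/
def SatC (v : ℕ → Bool) (C : Set (LTerm × LTerm)) : Prop :=
  ∀ c ∈ C, evalT v c.1 ≤ evalT v c.2

/-- The transitive closure of a constraint set: the least relation containing
the constraints and closed under transitivity. -/
inductive TCl (C : Set (LTerm × LTerm)) : LTerm → LTerm → Prop
  | base {a b : LTerm} : (a, b) ∈ C → TCl C a b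
  | trans {a b c : LTerm} : TCl C a b → TCl C b c → TCl C a c

lemma TCl_le {C : Set (LTerm × LTerm)} {v : ℕ → Bool} (hv : SatC v C)
    {a b : LTerm} (h : TCl C a b) : evalT v a ≤ evalT v b := by
  induction h with
  | base hm => exact hv _ hm
  | trans _ _ ih1 ih2 => exact le_trans ih1 ih2

/-- A finite set of atomic linearity constraints over the two-point lattice
{•, ◦} is satisfiable iff its transitive closure does not contain ◦ ⪯ •;
moreover, when the closure contains no such constraint, the valuation mapping
the variables reachable from ◦ (in the transitive closure) to ◦ and all other
variables to • is a solution. -/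
theorem atomic_constraints_satisfiable_iff (C : Set (LTerm × LTerm))
    (hfin : C.Finite) :
    ((∃ v : ℕ → Bool, SatC v C) ↔ ¬ TCl C LTerm.lin LTerm.unl) ∧
    (¬ TCl C LTerm.lin LTerm.unl →
      SatC (fun x => if TCl C LTerm.lin (LTerm.var x) then true else false) C) := by
  have key : ∀ h : ¬ TCl C LTerm.lin LTerm.unl,
      SatC (fun x => if TCl C LTerm.lin (LTerm.var x) then true else false) C := by
    intro h c hc
    set v := fun x => if TCl C LTerm.lin (LTerm.var x) then true else false with hv
    obtain ⟨a, b⟩ := c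
    -- suffices: if evalT v a = true then evalT v b = true
    cases ha : evalT v a
    · simp
    · have hlinb : TCl C LTerm.lin b := by
        cases a with
        | unl => simp [evalT] at ha
        | lin => exact TCl.base hc
        | var x =>
          simp only [evalT, hv] at ha
          split at ha
          · exact TCl.trans (by assumption) (TCl.base hc)
          · simp at ha
      cases b with
      | unl => exact absurd hlinb h
      | lin => simp [evalT]
      | var y => simp [evalT, hv, hlinb]
  refine ⟨⟨?_, fun h => ⟨_, key h⟩⟩, key⟩
  rintro ⟨v, hv⟩ htc
  have := TCl_le hv htc
  exact absurd this (by simp [evalT])
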